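/- arXiv:2603.17515 — 2 statements merged into one kernel-verified Lean document; each statement's English description precedes it below -/
import Mathlib

section
/- Let G, H be finite groups and U ≤ G × H a subdirect product. Under the hypothesis of Theorem on surjectivity, the condition G' ∩ k₁(U) = k₁(U') holds if and only if H' ∩ k₂(U) = k₂(U'). -/
/-!
By Goursat's lemma `G ⧸ k₁(U) ≃* H ⧸ k₂(U)`, so the commutator subgroups of the two quotients
have the same order `q`, and projecting `G'` onto `(G ⧸ k₁(U))'` gives
`|G'| = q · |G' ∩ k₁(U)|`, likewise `|H'| = q · |H' ∩ k₂(U)|`. Since `U'` projects onto `G'` and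
onto `H'`, counting it through either projection gives `|G'| · |k₂(U')| = |U'| = |H'| · |k₁(U')|`.
Hence `[G' ∩ k₁(U) : k₁(U')] = [H' ∩ k₂(U) : k₂(U')]`, and one index is `1` iff the other is.
-/

def p1 {G H : Type*} [Group G] [Group H] (U : Subgroup (G × H)) : Subgroup G :=
  U.map (MonoidHom.fst G H)

def p2 {G H : Type*} [Group G] [Group H] (U : Subgroup (G × H)) : Subgroup H :=
  U.map (MonoidHom.snd G H)

def k1 {G H : Type*} [Group G] [Group H] (U : Subgroup (G × H)) : Subgroup G :=
  U.comap (MonoidHom.inl G H)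

def k2 {G H : Type*} [Group G] [Group H] (U : Subgroup (G × H)) : Subgroup H :=
  U.comap (MonoidHom.inr G H)

namespace Subgroup

variable {G G' : Type*} [Group G] [Group G']

theorem card_eq_card_map_mul_card_inf_ker (K : Subgroup G) (f : G →* G') :
    Nat.card K = Nat.card (K.map f) * Nat.card ↥(K ⊓ f.ker) := by
  rw [← card_mul_index (f.ker.subgroupOf K), ← relIndex, relIndex_ker,
    ← card_map_of_injective K.subtype_injective, subgroupOf_map_subtype, inf_comm, mul_comm]

theorem eq_iff_eq_of_card_mul_eq [Finite G] [Finite G'] {A A' : Subgroup G} {B B' : Subgroup G'}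
    (hA : A' ≤ A) (hB : B' ≤ B) (h : Nat.card A * Nat.card B' = Nat.card B * Nat.card A') :
    A = A' ↔ B = B' := by
  have hA' : 0 < Nat.card A' := Nat.card_pos
  have hB' : 0 < Nat.card B' := Nat.card_pos
  constructor
  · rintro rfl
    refine (eq_of_le_of_card_ge hB (Nat.eq_of_mul_eq_mul_right hA' ?_).le).symm
    rw [← h, mul_comm]
  · rintro rfl
    refine (eq_of_le_of_card_ge hA (Nat.eq_of_mul_eq_mul_right hB' ?_).le).symm
    rw [h, mul_comm]

end Subgroup

section Commutator

open Subgroup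

variable {G G' : Type*} [Group G] [Group G']

theorem map_commutator_of_surjective {f : G →* G'} (hf : Function.Surjective f) :
    (commutator G).map f = commutator G' := by
  rw [commutator_def, commutator_def, map_commutator, map_top_of_surjective f hf]

theorem card_commutator_eq_of_mulEquiv (e : G ≃* G') :
    Nat.card (commutator G) = Nat.card (commutator G') := by
  rw [← map_commutator_of_surjective (f := e.toMonoidHom) e.surjective,
    card_map_of_injective e.injective]

theorem card_commutator_eq_card_commutator_quotient_mul (N : Subgroup G) [N.Normal] :
    Nat.card (commutator G) =
      Nat.card (commutator (G ⧸ N)) * Nat.card ↥(commutator G ⊓ N) := by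
  rw [card_eq_card_map_mul_card_inf_ker _ (QuotientGroup.mk' N),
    map_commutator_of_surjective (QuotientGroup.mk'_surjective N), QuotientGroup.ker_mk']

end Commutator

section SubdirectProduct

open Subgroup

variable {G H : Type*} [Group G] [Group H] (U : Subgroup (G × H))

theorem map_inl_k1 : (k1 U).map (MonoidHom.inl G H) = U ⊓ (MonoidHom.snd G H).ker := by
  ext ⟨g, h⟩
  simp +contextual [k1, mem_prod, eq_comm]

theorem map_inr_k2 : (k2 U).map (MonoidHom.inr G H) = U ⊓ (MonoidHom.fst G H).ker := by
  ext ⟨g, h⟩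
  simp +contextual [k2, mem_prod, eq_comm]

theorem card_eq_card_p2_mul_card_k1 : Nat.card U = Nat.card (p2 U) * Nat.card (k1 U) := by
  rw [card_eq_card_map_mul_card_inf_ker U (MonoidHom.snd G H), ← map_inl_k1,
    card_map_of_injective fun _ _ h => congrArg Prod.fst h]
  rfl

theorem card_eq_card_p1_mul_card_k2 : Nat.card U = Nat.card (p1 U) * Nat.card (k2 U) := by
  rw [card_eq_card_map_mul_card_inf_ker U (MonoidHom.fst G H), ← map_inr_k2,
    card_map_of_injective fun _ _ h => congrArg Prod.snd h]
  rfl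

theorem k1_le_p1 : k1 U ≤ p1 U := fun g hg => ⟨(g, 1), hg, rfl⟩

theorem k2_le_p2 : k2 U ≤ p2 U := fun h hh => ⟨(1, h), hh, rfl⟩

theorem k1_eq_goursatFst : k1 U = U.goursatFst := by
  ext g; simp [k1]

theorem k2_eq_goursatSnd : k2 U = U.goursatSnd := by
  ext h; simp [k2]

variable {U}

theorem surjective_fst_of_p1_eq_top (h : p1 U = ⊤) :
    Function.Surjective (Prod.fst ∘ U.subtype) := by
  intro g
  obtain ⟨u, hu, rfl⟩ := h ▸ mem_top g
  exact ⟨⟨u, hu⟩, rfl⟩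

theorem surjective_snd_of_p2_eq_top (h : p2 U = ⊤) :
    Function.Surjective (Prod.snd ∘ U.subtype) := by
  intro g
  obtain ⟨u, hu, rfl⟩ := h ▸ mem_top g
  exact ⟨⟨u, hu⟩, rfl⟩

theorem p1_commutator_of_p1_eq_top (h : p1 U = ⊤) : p1 ⁅U, U⁆ = commutator G := by
  rw [commutator_def, ← h]
  exact map_commutator _ _ _

theorem p2_commutator_of_p2_eq_top (h : p2 U = ⊤) : p2 ⁅U, U⁆ = commutator H := by
  rw [commutator_def, ← h]
  exact map_commutator _ _ _

theorem k1_commutator_le_of_p1_eq_top (h : p1 U = ⊤) : k1 ⁅U, U⁆ ≤ commutator G ⊓ k1 U :=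
  le_inf (p1_commutator_of_p1_eq_top h ▸ k1_le_p1 _) (comap_mono U.commutator_le_self)

theorem k2_commutator_le_of_p2_eq_top (h : p2 U = ⊤) : k2 ⁅U, U⁆ ≤ commutator H ⊓ k2 U :=
  le_inf (p2_commutator_of_p2_eq_top h ▸ k2_le_p2 _) (comap_mono U.commutator_le_self)

theorem card_commutator_inf_k1_mul_card_k2_commutator [Finite H]
    (h1 : p1 U = ⊤) (h2 : p2 U = ⊤) :
    Nat.card ↥(commutator G ⊓ k1 U) * Nat.card (k2 ⁅U, U⁆) =
      Nat.card ↥(commutator H ⊓ k2 U) * Nat.card (k1 ⁅U, U⁆) := by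
  have hs1 := surjective_fst_of_p1_eq_top h1
  have hs2 := surjective_snd_of_p2_eq_top h2
  have := normal_goursatFst hs1
  have := normal_goursatSnd hs2
  obtain ⟨e, -⟩ := goursat_surjective hs1 hs2
  have hG := card_commutator_eq_card_commutator_quotient_mul U.goursatFst
  have hH := card_commutator_eq_card_commutator_quotient_mul U.goursatSnd
  rw [card_commutator_eq_of_mulEquiv e] at hG
  rw [k1_eq_goursatFst U, k2_eq_goursatSnd U]
  refine Nat.eq_of_mul_eq_mul_left (Nat.card_pos (α := commutator (H ⧸ U.goursatSnd))) ?_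
  calc _ = Nat.card (commutator G) * Nat.card (k2 ⁅U, U⁆) := by rw [hG, mul_assoc]
    _ = Nat.card ↥⁅U, U⁆ := by rw [card_eq_card_p1_mul_card_k2, p1_commutator_of_p1_eq_top h1]
    _ = Nat.card (commutator H) * Nat.card (k1 ⁅U, U⁆) := by
      rw [card_eq_card_p2_mul_card_k1, p2_commutator_of_p2_eq_top h2]
    _ = _ := by rw [hH, mul_assoc]

end SubdirectProduct

theorem extensibility_condition_symm {G H : Type*} [Group G] [Group H]
    [Finite G] [Finite H] (U : Subgroup (G × H))
    (h1 : p1 U = ⊤) (h2 : p2 U = ⊤) :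
    commutator G ⊓ k1 U = k1 ⁅U, U⁆ ↔ commutator H ⊓ k2 U = k2 ⁅U, U⁆ :=
  Subgroup.eq_iff_eq_of_card_mul_eq (k1_commutator_le_of_p1_eq_top h1)
    (k2_commutator_le_of_p2_eq_top h2) (card_commutator_inf_k1_mul_card_k2_commutator h1 h2)
end

section
/- Let G be a finite group, φ ∈ Aut(G), and Δ(G,φ) ≤ U ≤ G × G. Then k₁(U') = [k₁(U), G], where U' is the commutator subgroup of U. -/
def twistedDiag {G : Type*} [Group G] (φ : G ≃* G) : Subgroup (G × G) :=
  ((MonoidHom.id G).prod φ.toMonoidHom).range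

/-! Write `N = k1 U`. Conjugating `(n, 1)` by `(g, φ g) ∈ U` shows that `N` is normal, and the
commutator of `(n, 1)` with `(g, φ g)` is `(⁅n, g⁆, 1)`, so `⁅N, G⁆ ≤ k1 U'`. Conversely every
`(a, b) ∈ U` satisfies `a ≡ φ⁻¹ b` modulo `N`, which is central modulo `⁅N, G⁆`. Hence the two
homomorphisms `(a, b) ↦ a` and `(a, b) ↦ φ⁻¹ b` into `G ⧸ ⁅N, G⁆` agree on commutators of `U`,
and evaluating them at `(x, 1) ∈ U'` gives `x ∈ ⁅N, G⁆`. -/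

open scoped commutatorElement

open Subgroup

section CentralCommutator

variable {Q : Type*} [Group Q]

theorem commutatorElement_mul_left_of_mem_center {z : Q} (hz : z ∈ center Q) (b c : Q) :
    ⁅z * b, c⁆ = ⁅b, c⁆ :=
  calc ⁅z * b, c⁆ = z * (b * c * b⁻¹) * z⁻¹ * c⁻¹ := by group
    _ = ⁅b, c⁆ := by rw [← mem_center_iff.mp hz, mul_inv_cancel_right, commutatorElement_def]

theorem commutatorElement_eq_of_mul_inv_mem_center {a b c d : Q} (hab : a * b⁻¹ ∈ center Q)
    (hcd : c * d⁻¹ ∈ center Q) : ⁅a, c⁆ = ⁅b, d⁆ :=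
  calc ⁅a, c⁆ = ⁅a * b⁻¹ * b, c⁆ := by rw [inv_mul_cancel_right]
    _ = ⁅c, b⁆⁻¹ := by rw [commutatorElement_mul_left_of_mem_center hab, commutatorElement_inv]
    _ = ⁅c * d⁻¹ * d, b⁆⁻¹ := by rw [inv_mul_cancel_right]
    _ = ⁅b, d⁆ := by rw [commutatorElement_mul_left_of_mem_center hcd, commutatorElement_inv]

theorem QuotientGroup.mk'_mem_center_quotient_commutator_top {N : Subgroup Q} [N.Normal] {n : Q}
    (hn : n ∈ N) : QuotientGroup.mk' ⁅N, ⊤⁆ n ∈ center (Q ⧸ ⁅N, ⊤⁆) := by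
  have hstep : n ∈ Subgroup.upperCentralSeriesStep ⁅N, ⊤⁆ := fun _ =>
    commutator_mem_commutator hn trivial
  rwa [Subgroup.upperCentralSeriesStep_eq_comap_center] at hstep

end CentralCommutator

section K1

variable {G H : Type*} [Group G] [Group H] {U : Subgroup (G × H)}

theorem mem_k1 {g : G} : g ∈ k1 U ↔ (g, 1) ∈ U := Iff.rfl

theorem k1_normal (hU : ∀ g, ∃ h, (g, h) ∈ U) : (k1 U).Normal where
  conj_mem n hn g := by
    obtain ⟨h, hgh⟩ := hU g
    have hconj := U.mul_mem (U.mul_mem hgh hn) (U.inv_mem hgh)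
    simpa [mem_k1] using hconj

theorem commutator_k1_top_le_k1_commutator (hU : ∀ g, ∃ h, (g, h) ∈ U) :
    ⁅k1 U, (⊤ : Subgroup G)⁆ ≤ k1 ⁅U, U⁆ := by
  rw [commutator_le]
  intro n hn g _
  obtain ⟨h, hgh⟩ := hU g
  have hcomm := commutator_mem_commutator (mem_k1.mp hn) hgh
  simpa [mem_k1, commutatorElement_def] using hcomm

theorem mul_inv_mem_k1 {σ : H →* G} (hσ : ∀ h, (σ h, h) ∈ U) {a : G} {b : H}
    (hab : (a, b) ∈ U) : a * (σ b)⁻¹ ∈ k1 U := by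
  have hquot := U.mul_mem hab (U.inv_mem (hσ b))
  simpa [mem_k1] using hquot

theorem k1_commutator_le_commutator_k1_top [(k1 U).Normal] (σ : H →* G)
    (hσ : ∀ h, (σ h, h) ∈ U) : k1 ⁅U, U⁆ ≤ ⁅k1 U, (⊤ : Subgroup G)⁆ := by
  let π := QuotientGroup.mk' ⁅k1 U, (⊤ : Subgroup G)⁆
  let f : G × H →* G ⧸ ⁅k1 U, (⊤ : Subgroup G)⁆ := π.comp (MonoidHom.fst G H)
  let g : G × H →* G ⧸ ⁅k1 U, (⊤ : Subgroup G)⁆ := (π.comp σ).comp (MonoidHom.snd G H)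
  have hcentral : ∀ p ∈ U, f p * (g p)⁻¹ ∈ center (G ⧸ ⁅k1 U, (⊤ : Subgroup G)⁆) :=
    fun _ hp => QuotientGroup.mk'_mem_center_quotient_commutator_top (mul_inv_mem_k1 hσ hp)
  have hle : ⁅U, U⁆ ≤ f.eqLocus g := by
    rw [commutator_le]
    intro p hp q hq
    change f ⁅p, q⁆ = g ⁅p, q⁆
    rw [map_commutatorElement, map_commutatorElement]
    exact commutatorElement_eq_of_mul_inv_mem_center (hcentral p hp) (hcentral q hq)
  intro x hx
  have hfg : f (x, 1) = g (x, 1) := hle hx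
  simpa [f, g, π, QuotientGroup.eq_one_iff] using hfg

end K1

theorem k1_commutator_eq_general {G : Type*} [Group G] (φ : G ≃* G)
    (U : Subgroup (G × G)) (hU : twistedDiag φ ≤ U) :
    k1 ⁅U, U⁆ = ⁅k1 U, (⊤ : Subgroup G)⁆ := by
  have hgraph : ∀ g, (g, φ g) ∈ U := fun g => hU ⟨g, rfl⟩
  have hfst : ∀ g, ∃ h, (g, h) ∈ U := fun g => ⟨φ g, hgraph g⟩
  have hsection : ∀ h, (φ.symm h, h) ∈ U := fun h => by simpa using hgraph (φ.symm h)
  have := k1_normal hfst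
  exact le_antisymm (k1_commutator_le_commutator_k1_top φ.symm.toMonoidHom hsection)
    (commutator_k1_top_le_k1_commutator hfst)

theorem k1_commutator_eq {G : Type*} [Group G] [Finite G] (φ : G ≃* G)
    (U : Subgroup (G × G)) (hU : twistedDiag φ ≤ U) :
    k1 ⁅U, U⁆ = ⁅k1 U, (⊤ : Subgroup G)⁆ :=
  k1_commutator_eq_general φ U hU
end
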